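/- Let R be a Γ-graded ring and M a Γ-graded right R-module. Then: (1) M is finitely generated if and only if M/rad^gr(M) is finitely generated and rad^gr(M) is gr-superfluous in M; (2) M is finitely gr-cogenerated if and only if soc_gr(M) is finitely gr-cogenerated and soc_gr(M) is gr-essential in M. -/

import Mathlib

open CategoryTheory

universe u

instance addSubgroupNormalOfComm {M : Type*} [AddCommGroup M] (N : AddSubgroup M) :
    N.Normal := ⟨fun n hn g => by simpa [add_comm] using hn⟩

variable {Γ : Type u} [Groupoid.{u} Γ]

/-- The morphisms of the groupoid `Γ`, bundled together with their endpoints.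
For `γ : GrIdx Γ`, the morphism `γ.2.2 : γ.1 ⟶ γ.2.1` has domain `d(γ) = γ.1`
and range `r(γ) = γ.2.1`. -/
abbrev GrIdx (Γ : Type u) [Groupoid.{u} Γ] : Type u := Σ e f : Γ, e ⟶ f

/-- The data of a `Γ`-grading, a multiplication, and local units `1_e` on an
additive group `R`. -/
structure GRingData (Γ : Type u) [Groupoid.{u} Γ] (R : Type u) [AddCommGroup R] :
    Type u where
  mul : R → R → R
  component : ∀ {e f : Γ}, (e ⟶ f) → AddSubgroup R
  one : Γ → R

/-- The data of a right scalar multiplication by `R` and a `Γ`-grading on an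
additive group `M`. -/
structure GModData (Γ : Type u) [Groupoid.{u} Γ] (R : Type u) (M : Type u)
    [AddCommGroup M] : Type u where
  smul : M → R → M
  component : ∀ {e f : Γ}, (e ⟶ f) → AddSubgroup M

namespace GRingData

variable {R : Type u} [AddCommGroup R]

/-- `𝒜` makes `R` an (object unital) `Γ`-graded ring: `R` is an associative ring,
`R = ⊕_γ R_γ`, `R_γ R_δ ⊆ R_{γδ}` when `γδ` is defined and `R_γ R_δ = 0` otherwise,
each `R_e` (`e ∈ Γ₀`) is unital with identity `1_e`, and
`1_{r(γ)} a = a 1_{d(γ)} = a` for all `a ∈ R_γ`. -/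
structure IsObjectUnital (𝒜 : GRingData Γ R) : Prop where
  mul_assoc : ∀ a b c : R, 𝒜.mul (𝒜.mul a b) c = 𝒜.mul a (𝒜.mul b c)
  left_distrib : ∀ a b c : R, 𝒜.mul a (b + c) = 𝒜.mul a b + 𝒜.mul a c
  right_distrib : ∀ a b c : R, 𝒜.mul (a + b) c = 𝒜.mul a c + 𝒜.mul b c
  decompose : ∀ x : R, ∃ (s : Finset (GrIdx Γ)) (cf : GrIdx Γ → R),
      (∀ γ ∈ s, cf γ ∈ 𝒜.component γ.2.2) ∧ x = ∑ γ ∈ s, cf γ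
  independent : ∀ (s : Finset (GrIdx Γ)) (cf : GrIdx Γ → R),
      (∀ γ ∈ s, cf γ ∈ 𝒜.component γ.2.2) → ∑ γ ∈ s, cf γ = 0 → ∀ γ ∈ s, cf γ = 0
  mul_mem : ∀ {e f g : Γ} (γ : e ⟶ f) (δ : g ⟶ e) {a b : R},
      a ∈ 𝒜.component γ → b ∈ 𝒜.component δ → 𝒜.mul a b ∈ 𝒜.component (δ ≫ γ)
  mul_eq_zero : ∀ {e f g h : Γ} (γ : e ⟶ f) (δ : g ⟶ h) {a b : R},
      h ≠ e → a ∈ 𝒜.component γ → b ∈ 𝒜.component δ → 𝒜.mul a b = 0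
  one_mem : ∀ e : Γ, 𝒜.one e ∈ 𝒜.component (𝟙 e)
  one_mul : ∀ {e f : Γ} (γ : e ⟶ f) {a : R}, a ∈ 𝒜.component γ → 𝒜.mul (𝒜.one f) a = a
  mul_one : ∀ {e f : Γ} (γ : e ⟶ f) {a : R}, a ∈ 𝒜.component γ → 𝒜.mul a (𝒜.one e) = a

/-- `R` regarded as a (`Γ`-graded) right module over itself. -/
def toMod (𝒜 : GRingData Γ R) : GModData Γ R R where
  smul := 𝒜.mul
  component := fun γ => 𝒜.component γ

end GRingData

namespace GModData

variable {R : Type u} {M : Type u} {M' : Type u} [AddCommGroup M] [AddCommGroup M']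

/-- `ℳ` makes `M` a unital `Γ`-graded right module over the `Γ`-graded ring `𝒜`:
`M` is a right `R`-module, `M = ⊕_γ M_γ`, `M_σ R_τ ⊆ M_{στ}` when `στ` is defined
and `M_σ R_τ = 0` otherwise, and `m 1_{d(σ)} = m` for all `m ∈ M_σ`. -/
structure IsGraded [AddCommGroup R] (𝒜 : GRingData Γ R) (ℳ : GModData Γ R M) :
    Prop where
  add_smul : ∀ (m n : M) (a : R), ℳ.smul (m + n) a = ℳ.smul m a + ℳ.smul n a
  smul_add : ∀ (m : M) (a b : R), ℳ.smul m (a + b) = ℳ.smul m a + ℳ.smul m b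
  smul_mul : ∀ (m : M) (a b : R), ℳ.smul m (𝒜.mul a b) = ℳ.smul (ℳ.smul m a) b
  decompose : ∀ x : M, ∃ (s : Finset (GrIdx Γ)) (cf : GrIdx Γ → M),
      (∀ γ ∈ s, cf γ ∈ ℳ.component γ.2.2) ∧ x = ∑ γ ∈ s, cf γ
  independent : ∀ (s : Finset (GrIdx Γ)) (cf : GrIdx Γ → M),
      (∀ γ ∈ s, cf γ ∈ ℳ.component γ.2.2) → ∑ γ ∈ s, cf γ = 0 → ∀ γ ∈ s, cf γ = 0
  smul_mem : ∀ {e f g : Γ} (σ : e ⟶ f) (τ : g ⟶ e) {m : M} {a : R},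
      m ∈ ℳ.component σ → a ∈ 𝒜.component τ → ℳ.smul m a ∈ ℳ.component (τ ≫ σ)
  smul_eq_zero : ∀ {e f g h : Γ} (σ : e ⟶ f) (τ : g ⟶ h) {m : M} {a : R},
      h ≠ e → m ∈ ℳ.component σ → a ∈ 𝒜.component τ → ℳ.smul m a = 0
  smul_one : ∀ {e f : Γ} (σ : e ⟶ f) {m : M}, m ∈ ℳ.component σ →
      ℳ.smul m (𝒜.one e) = m

/-- An element of `M` is homogeneous if it belongs to some homogeneous component. -/
def IsHomogeneous (ℳ : GModData Γ R M) (m : M) : Prop :=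
  ∃ (e f : Γ) (γ : e ⟶ f), m ∈ ℳ.component γ

/-- `N` is a graded submodule of `M`: a submodule (subgroup closed under the right
`R`-action) generated by its homogeneous elements, i.e. `N = ⊕_γ (N ∩ M_γ)`. -/
def IsGrSub (ℳ : GModData Γ R M) (N : AddSubgroup M) : Prop :=
  (∀ m ∈ N, ∀ a : R, ℳ.smul m a ∈ N) ∧
  ∀ n ∈ N, n ∈ AddSubgroup.closure {x : M | x ∈ N ∧ ℳ.IsHomogeneous x}

/-- `M` is gr-noetherian: there is no strictly increasing infinite chain of graded
submodules. -/
def GrNoetherian (ℳ : GModData Γ R M) : Prop :=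
  ¬ ∃ c : ℕ → AddSubgroup M, (∀ n, ℳ.IsGrSub (c n)) ∧ ∀ n, c n < c (n + 1)

/-- `M` is gr-artinian: there is no strictly decreasing infinite chain of graded
submodules. -/
def GrArtinian (ℳ : GModData Γ R M) : Prop :=
  ¬ ∃ c : ℕ → AddSubgroup M, (∀ n, ℳ.IsGrSub (c n)) ∧ ∀ n, c (n + 1) < c n

/-- The `R`-submodule of `M` generated by a set `X`. -/
def rClosure (ℳ : GModData Γ R M) (X : Set M) : AddSubgroup M :=
  sInf {N : AddSubgroup M | X ⊆ N ∧ ∀ m ∈ N, ∀ a : R, ℳ.smul m a ∈ N}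

/-- `M` is finitely generated (as a right `R`-module). -/
def FG (ℳ : GModData Γ R M) : Prop := ∃ s : Finset M, ℳ.rClosure ↑s = ⊤

/-- The submodule `N` of `M` is finitely generated. -/
def FGSub (ℳ : GModData Γ R M) (N : AddSubgroup M) : Prop :=
  ∃ s : Finset M, ↑s ⊆ (N : Set M) ∧ ℳ.rClosure ↑s = N

/-- `M` is finitely gr-cogenerated: every family of graded submodules with zero
intersection has a finite subfamily with zero intersection. -/
def FinGrCogenerated (ℳ : GModData Γ R M) : Prop :=
  ∀ S : Set (AddSubgroup M), (∀ N ∈ S, ℳ.IsGrSub N) → sInf S = ⊥ →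
    ∃ t : Finset (AddSubgroup M), ↑t ⊆ S ∧ t.inf id = ⊥

/-- The quotient module `M/N`, with grading `(M/N)_γ = (M_γ + N)/N`. -/
noncomputable def quot (ℳ : GModData Γ R M) (N : AddSubgroup M) :
    GModData Γ R (M ⧸ N) where
  smul x a := QuotientAddGroup.mk (ℳ.smul (Quotient.out x) a)
  component := fun γ => (ℳ.component γ).map (QuotientAddGroup.mk' N)

open scoped Classical in
/-- The submodule `N`, regarded as a `Γ`-graded right `R`-module. -/
noncomputable def restrict (ℳ : GModData Γ R M) (N : AddSubgroup M) :
    GModData Γ R ↥N where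
  smul m a := if h : ℳ.smul (↑m) a ∈ N then ⟨ℳ.smul (↑m) a, h⟩ else 0
  component := fun γ => (ℳ.component γ).addSubgroupOf N

/-- The subquotient module `P/N` (for `N ≤ P` graded submodules of `M`). -/
noncomputable def subquot (ℳ : GModData Γ R M) (N P : AddSubgroup M) :
    GModData Γ R (↥P ⧸ N.addSubgroupOf P) :=
  (ℳ.restrict P).quot (N.addSubgroupOf P)

/-- `M(e) = ⊕_{r(γ) = e} M_γ`, for `e ∈ Γ₀`. -/
def part (ℳ : GModData Γ R M) (e : Γ) : AddSubgroup M :=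
  ⨆ (f : Γ) (γ : f ⟶ e), ℳ.component γ

/-- `Γ'₀(M) = {e ∈ Γ₀ : M(e) ≠ 0}`. -/
def partSupport (ℳ : GModData Γ R M) : Set Γ := {e : Γ | ℳ.part e ≠ ⊥}

/-- `M` is `Γ₀`-noetherian: `M(e)` is gr-noetherian for every `e ∈ Γ₀`. -/
def G0Noetherian (ℳ : GModData Γ R M) : Prop :=
  ∀ e : Γ, (ℳ.restrict (ℳ.part e)).GrNoetherian

/-- `M` is `Γ₀`-artinian: `M(e)` is gr-artinian for every `e ∈ Γ₀`. -/
def G0Artinian (ℳ : GModData Γ R M) : Prop :=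
  ∀ e : Γ, (ℳ.restrict (ℳ.part e)).GrArtinian

/-- `M` is gr-simple: `M ≠ 0` and its only graded submodules are `0` and `M`. -/
def IsGrSimple (ℳ : GModData Γ R M) : Prop :=
  (⊤ : AddSubgroup M) ≠ ⊥ ∧ ∀ N : AddSubgroup M, ℳ.IsGrSub N → N = ⊥ ∨ N = ⊤

/-- `N` is a gr-simple graded submodule of `M`. -/
def IsGrSimpleSub (ℳ : GModData Γ R M) (N : AddSubgroup M) : Prop :=
  ℳ.IsGrSub N ∧ N ≠ ⊥ ∧
    ∀ L : AddSubgroup M, ℳ.IsGrSub L → L ≤ N → L = ⊥ ∨ L = N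

/-- `N` is a gr-maximal graded submodule of `M`. -/
def IsGrMaximalSub (ℳ : GModData Γ R M) (N : AddSubgroup M) : Prop :=
  ℳ.IsGrSub N ∧ N ≠ ⊤ ∧
    ∀ L : AddSubgroup M, ℳ.IsGrSub L → N ≤ L → L = N ∨ L = ⊤

/-- The graded Jacobson radical of `M`: the intersection of all gr-maximal graded
submodules of `M` (equal to `M` when there are none). -/
def grRad (ℳ : GModData Γ R M) : AddSubgroup M := sInf {N | ℳ.IsGrMaximalSub N}

/-- The gr-socle of `M`: the sum of all gr-simple graded submodules of `M`
(equal to `0` when there are none). -/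
def grSoc (ℳ : GModData Γ R M) : AddSubgroup M := sSup {N | ℳ.IsGrSimpleSub N}

/-- `N` is gr-superfluous in `M`. -/
def GrSuperfluous (ℳ : GModData Γ R M) (N : AddSubgroup M) : Prop :=
  ∀ X : AddSubgroup M, ℳ.IsGrSub X → N ⊔ X = ⊤ → X = ⊤

/-- `N` is gr-essential in `M`. -/
def GrEssential (ℳ : GModData Γ R M) (N : AddSubgroup M) : Prop :=
  ∀ X : AddSubgroup M, ℳ.IsGrSub X → N ⊓ X = ⊥ → X = ⊥

/-- `M` is gr-semisimple: the sum of all gr-simple graded submodules is `M`. -/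
def GrSemisimple (ℳ : GModData Γ R M) : Prop :=
  sSup {N : AddSubgroup M | ℳ.IsGrSimpleSub N} = ⊤

/-- `c 0 = 0 ⊆ c 1 ⊆ ⋯ ⊆ c n = M` is a gr-composition series of `M` of length `n`. -/
def IsGrCompSeries (ℳ : GModData Γ R M) (n : ℕ) (c : ℕ → AddSubgroup M) : Prop :=
  c 0 = ⊥ ∧ c n = ⊤ ∧ (∀ i, i ≤ n → ℳ.IsGrSub (c i)) ∧
  (∀ i, i < n → c i ≤ c (i + 1)) ∧
  ∀ i, i < n → (ℳ.subquot (c i) (c (i + 1))).IsGrSimple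

/-- `M` has finite gr-length: it admits a gr-composition series. -/
def FiniteGrLength (ℳ : GModData Γ R M) : Prop := ∃ n c, ℳ.IsGrCompSeries n c

/-- `g : M → M'` is a gr-homomorphism of graded right `R`-modules. -/
def IsGrHom (ℳ : GModData Γ R M) (𝒩 : GModData Γ R M') (g : M → M') : Prop :=
  (∀ m n : M, g (m + n) = g m + g n) ∧
  (∀ (m : M) (a : R), g (ℳ.smul m a) = 𝒩.smul (g m) a) ∧
  ∀ (e f : Γ) (σ : e ⟶ f), ∀ m ∈ ℳ.component σ, g m ∈ 𝒩.component σ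

/-- `M` and `M'` are gr-isomorphic (there is a bijective gr-homomorphism). -/
def GrIso (ℳ : GModData Γ R M) (𝒩 : GModData Γ R M') : Prop :=
  ∃ g : M → M', IsGrHom ℳ 𝒩 g ∧ Function.Bijective g

/-- `g : M → M'` is a homomorphism of degree `γ` (where `γ : e ⟶ f`, i.e.
`d(γ) = e`): `g(M_σ) ⊆ M'_{γσ}` when `γσ` is defined and `g(M_σ) = 0` otherwise. -/
def IsHomOfDeg (ℳ : GModData Γ R M) (𝒩 : GModData Γ R M') {e f : Γ} (γ : e ⟶ f)
    (g : M → M') : Prop :=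
  (∀ m n : M, g (m + n) = g m + g n) ∧
  (∀ (m : M) (a : R), g (ℳ.smul m a) = 𝒩.smul (g m) a) ∧
  (∀ (a : Γ) (σ : a ⟶ e), ∀ m ∈ ℳ.component σ, g m ∈ 𝒩.component (σ ≫ γ)) ∧
  (∀ (a b : Γ) (σ : a ⟶ b), b ≠ e → ∀ m ∈ ℳ.component σ, g m = 0)

/-- `MJ`: the submodule of `M` consisting of finite sums of elements `m a`,
`m ∈ M`, `a ∈ J`. -/
def smulSet [AddCommGroup R] (ℳ : GModData Γ R M) (J : AddSubgroup R) : AddSubgroup M :=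
  AddSubgroup.closure {x : M | ∃ (m : M) (a : R), a ∈ J ∧ x = ℳ.smul m a}

open scoped Classical in
/-- The direct sum `⊕_{j ∈ J} M_j` of graded right modules, with grading
`(⊕_j M_j)_γ = ⊕_j (M_j)_γ`. -/
noncomputable def dsum {J : Type u} {Mf : J → Type u} [∀ j, AddCommGroup (Mf j)]
    (df : ∀ j, GModData Γ R (Mf j)) : GModData Γ R (Π₀ j, Mf j) where
  smul m a :=
    if h : ∃ y : Π₀ j, Mf j, ∀ j, y j = (df j).smul (m j) a then h.choose else 0
  component := fun γ => ⨅ j : J, ((df j).component γ).comap (DFinsupp.evalAddMonoidHom j)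

/-- A descending chain of graded submodules is tight if
`Γ'₀(M_i/M_{i+1}) ⊇ Γ'₀(M_{i+1}/M_{i+2})` for all `i`. -/
def TightDesc (ℳ : GModData Γ R M) (c : ℕ → AddSubgroup M) : Prop :=
  (∀ i, ℳ.IsGrSub (c i)) ∧ (∀ i, c (i + 1) ≤ c i) ∧
  ∀ i, (ℳ.subquot (c (i + 2)) (c (i + 1))).partSupport ⊆
    (ℳ.subquot (c (i + 1)) (c i)).partSupport

/-- An ascending chain of graded submodules is tight if
`Γ'₀(M_{i+1}/M_i) ⊇ Γ'₀(M_{i+2}/M_{i+1})` for all `i`. -/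
def TightAsc (ℳ : GModData Γ R M) (c : ℕ → AddSubgroup M) : Prop :=
  (∀ i, ℳ.IsGrSub (c i)) ∧ (∀ i, c i ≤ c (i + 1)) ∧
  ∀ i, (ℳ.subquot (c (i + 1)) (c (i + 2))).partSupport ⊆
    (ℳ.subquot (c i) (c (i + 1))).partSupport

/-- `M` is strongly `Γ₀`-artinian: every tight descending chain of graded
submodules stabilizes. -/
def StronglyG0Artinian (ℳ : GModData Γ R M) : Prop :=
  ∀ c : ℕ → AddSubgroup M, ℳ.TightDesc c → ∃ n, ∀ m, n ≤ m → c m = c n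

/-- `M` is strongly `Γ₀`-noetherian: every tight ascending chain of graded
submodules stabilizes. -/
def StronglyG0Noetherian (ℳ : GModData Γ R M) : Prop :=
  ∀ c : ℕ → AddSubgroup M, ℳ.TightAsc c → ∃ n, ∀ m, n ≤ m → c m = c n

end GModData

/-- `E` is a gr-injective graded right `R`-module: for all graded right `R`-modules
`M`, `N`, every injective gr-homomorphism `g : N → M` and every gr-homomorphism
`h : N → E`, there is a gr-homomorphism `h' : M → E` with `h' ∘ g = h`. -/
def GrInjective {R : Type u} [AddCommGroup R] (𝒜 : GRingData Γ R) {E : Type u}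
    [AddCommGroup E] (ℰ : GModData Γ R E) : Prop :=
  ∀ (M N : Type u) [AddCommGroup M] [AddCommGroup N]
    (ℳ : GModData Γ R M) (𝒩 : GModData Γ R N),
    ℳ.IsGraded 𝒜 → 𝒩.IsGraded 𝒜 →
    ∀ g : N → M, GModData.IsGrHom 𝒩 ℳ g → Function.Injective g →
    ∀ h : N → E, GModData.IsGrHom 𝒩 ℰ h →
    ∃ h' : M → E, GModData.IsGrHom ℳ ℰ h' ∧ ∀ y : N, h' (g y) = h y

/-- A bundled `Γ`-graded right module over the graded ring `𝒜`. -/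
structure GrModule (Γ : Type u) [Groupoid.{u} Γ] {R : Type u} [AddCommGroup R]
    (𝒜 : GRingData Γ R) : Type (u + 1) where
  carrier : Type u
  [addCommGroup : AddCommGroup carrier]
  data : GModData Γ R carrier
  graded : data.IsGraded 𝒜

attribute [instance] GrModule.addCommGroup

namespace GRingData

variable {R : Type u} [AddCommGroup R]

/-- `R` is right `Γ₀`-noetherian. -/
def RightG0Noetherian (𝒜 : GRingData Γ R) : Prop := 𝒜.toMod.G0Noetherian

/-- `R` is right `Γ₀`-artinian. -/
def RightG0Artinian (𝒜 : GRingData Γ R) : Prop := 𝒜.toMod.G0Artinian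

/-- The principal right ideal `aR`. -/
def principal (𝒜 : GRingData Γ R) (a : R) : AddSubgroup R :=
  AddSubgroup.closure {x : R | ∃ b : R, x = 𝒜.mul a b}

/-- A gr-principal graded right ideal: one of the form `aR` with `a` homogeneous. -/
def IsGrPrincipal (𝒜 : GRingData Γ R) (N : AddSubgroup R) : Prop :=
  ∃ a : R, 𝒜.toMod.IsHomogeneous a ∧ N = 𝒜.principal a

/-- `N` is a graded left ideal of `R`, i.e. a graded submodule of `_R R`. -/
def IsGrLeftIdeal (𝒜 : GRingData Γ R) (N : AddSubgroup R) : Prop :=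
  (∀ m ∈ N, ∀ a : R, 𝒜.mul a m ∈ N) ∧
  ∀ n ∈ N, n ∈ AddSubgroup.closure {x : R | x ∈ N ∧ 𝒜.toMod.IsHomogeneous x}

/-- `N` is a gr-maximal graded left ideal of `R`. -/
def IsGrMaxLeftIdeal (𝒜 : GRingData Γ R) (N : AddSubgroup R) : Prop :=
  𝒜.IsGrLeftIdeal N ∧ N ≠ ⊤ ∧
    ∀ L : AddSubgroup R, 𝒜.IsGrLeftIdeal L → N ≤ L → L = N ∨ L = ⊤

/-- The graded Jacobson radical of `R` as a left module over itself:
the intersection of all gr-maximal graded left ideals. -/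
def lRad (𝒜 : GRingData Γ R) : AddSubgroup R := sInf {N | 𝒜.IsGrMaxLeftIdeal N}

/-- `N` is a graded (two-sided) ideal of `R`. -/
def IsGrIdeal (𝒜 : GRingData Γ R) (N : AddSubgroup R) : Prop :=
  𝒜.toMod.IsGrSub N ∧ ∀ m ∈ N, ∀ a : R, 𝒜.mul a m ∈ N

/-- `N ⊆ R_e` is a left ideal of the unital ring `R_e`. -/
def IsLeftIdealIn (𝒜 : GRingData Γ R) (e : Γ) (N : Set R) : Prop :=
  N ⊆ (𝒜.component (𝟙 e) : Set R) ∧ (0 : R) ∈ N ∧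
  (∀ a ∈ N, ∀ b ∈ N, a - b ∈ N) ∧
  ∀ r ∈ 𝒜.component (𝟙 e), ∀ a ∈ N, 𝒜.mul r a ∈ N

/-- `N` is a maximal left ideal of the unital ring `R_e`. -/
def IsMaxLeftIdealIn (𝒜 : GRingData Γ R) (e : Γ) (N : Set R) : Prop :=
  𝒜.IsLeftIdealIn e N ∧ N ≠ (𝒜.component (𝟙 e) : Set R) ∧
  ∀ L : Set R, 𝒜.IsLeftIdealIn e L → N ⊆ L →
    L = N ∨ L = (𝒜.component (𝟙 e) : Set R)

/-- The Jacobson radical `rad(R_e)` of the unital ring `R_e`, as a subset of `R`: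
the intersection of all maximal left ideals of `R_e`. -/
def radIn (𝒜 : GRingData Γ R) (e : Γ) : Set R :=
  (𝒜.component (𝟙 e) : Set R) ∩ ⋂₀ {N : Set R | 𝒜.IsMaxLeftIdealIn e N}

/-- The quotient graded ring `R/I` of `R` by a graded ideal `I`. -/
noncomputable def quotRing (𝒜 : GRingData Γ R) (I : AddSubgroup R) :
    GRingData Γ (R ⧸ I) where
  mul x y := QuotientAddGroup.mk (𝒜.mul (Quotient.out x) (Quotient.out y))
  component := fun γ => (𝒜.component γ).map (QuotientAddGroup.mk' I)
  one e := QuotientAddGroup.mk (𝒜.one e)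

/-- `R` is a gr-semisimple ring. -/
def GrSemisimpleRing (𝒜 : GRingData Γ R) : Prop := 𝒜.toMod.GrSemisimple

/-- `R` is gr-semilocal: the `Γ`-graded ring `R/rad^gr(R)` is gr-semisimple. -/
noncomputable def GrSemilocal (𝒜 : GRingData Γ R) : Prop :=
  ((𝒜.quotRing 𝒜.toMod.grRad).GrSemisimpleRing)

end GRingData

/-!
(1) If `M` is finitely generated, the union of a chain of proper graded submodules is proper, so
by Zorn every proper graded submodule lies in a gr-maximal one; hence `rad^gr(M) + X = M` forces
`X = M`. Conversely, the homogeneous components of lifts of finitely many generators of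
`M/rad^gr(M)` generate a graded submodule `X` with `X + rad^gr(M) = M`, so `X = M`.

(2) Dually, finite gr-cogeneration makes the intersection of a chain of nonzero graded submodules
nonzero, so every nonzero graded submodule contains a gr-simple one: `soc_gr(M)` is gr-essential.
Conversely, a family of graded submodules of `M` with zero intersection traces to such a family
on `soc_gr(M)`; a finite subfamily then has intersection meeting `soc_gr(M)` in zero, hence is
zero by essentiality.
-/

namespace AddSubgroup

variable {G : Type*} [AddGroup G]

theorem sInf_image_addSubgroupOf (P : AddSubgroup G) (S : Set (AddSubgroup G)) :
    sInf ((·.addSubgroupOf P) '' S) = (sInf S).addSubgroupOf P := by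
  rw [sInf_image]
  exact ((gc_map_comap P.subtype).u_sInf).symm

theorem image_addSubgroupOf_image_map_subtype (P : AddSubgroup G) (S : Set (AddSubgroup P)) :
    (·.addSubgroupOf P) '' ((·.map P.subtype) '' S) = S := by
  rw [Set.image_image]
  conv_rhs => rw [← Set.image_id S]
  exact Set.image_congr fun N _ => comap_map_eq_self_of_injective P.subtype_injective N

end AddSubgroup

namespace GModData

section

variable {R M : Type u} [AddCommGroup M] {ℳ : GModData Γ R M}

def IsSubmodule (ℳ : GModData Γ R M) (N : AddSubgroup M) : Prop :=
  ∀ m ∈ N, ∀ a : R, ℳ.smul m a ∈ N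

def homogeneousSpan (ℳ : GModData Γ R M) (N : AddSubgroup M) : AddSubgroup M :=
  AddSubgroup.closure {x : M | x ∈ N ∧ ℳ.IsHomogeneous x}

theorem IsGrSub.isSubmodule {N : AddSubgroup M} (hN : ℳ.IsGrSub N) : ℳ.IsSubmodule N :=
  hN.1

theorem IsGrSub.le_homogeneousSpan {N : AddSubgroup M} (hN : ℳ.IsGrSub N) :
    N ≤ ℳ.homogeneousSpan N :=
  hN.2

theorem homogeneousSpan_mono {N N' : AddSubgroup M} (h : N ≤ N') :
    ℳ.homogeneousSpan N ≤ ℳ.homogeneousSpan N' :=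
  AddSubgroup.closure_mono fun _ hx => ⟨h hx.1, hx.2⟩

theorem exists_finsupp_of_mem_homogeneousSpan {N : AddSubgroup M} {n : M}
    (hn : n ∈ ℳ.homogeneousSpan N) :
    ∃ f : GrIdx Γ →₀ M, (∀ γ, f γ ∈ ℳ.component γ.2.2 ∧ f γ ∈ N) ∧
      n = f.sum fun _ x => x := by
  classical
  induction hn using AddSubgroup.closure_induction with
  | mem x hx =>
    obtain ⟨hxN, e, f, γ, hxγ⟩ := hx
    refine ⟨Finsupp.single ⟨e, f, γ⟩ x, fun δ => ?_,
      (Finsupp.sum_single_index (h := fun _ x => x) rfl).symm⟩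
    rw [Finsupp.single_apply]
    split_ifs with h
    · subst h
      exact ⟨hxγ, hxN⟩
    · exact ⟨zero_mem _, zero_mem _⟩
  | zero => exact ⟨0, fun _ => ⟨zero_mem _, zero_mem _⟩, by simp⟩
  | add x y _ _ hx hy =>
    obtain ⟨f, hf, rfl⟩ := hx
    obtain ⟨g, hg, rfl⟩ := hy
    exact ⟨f + g, fun γ => ⟨add_mem (hf γ).1 (hg γ).1, add_mem (hf γ).2 (hg γ).2⟩,
      (Finsupp.sum_add_index' (fun _ => rfl) fun _ _ _ => rfl).symm⟩
  | neg x _ hx =>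
    obtain ⟨f, hf, rfl⟩ := hx
    exact ⟨-f, fun γ => ⟨neg_mem (hf γ).1, neg_mem (hf γ).2⟩, by simp [Finsupp.sum_neg_index]⟩

theorem subset_rClosure {X : Set M} : X ⊆ ℳ.rClosure X := fun _ hx =>
  AddSubgroup.mem_sInf.mpr fun _ hN => hN.1 hx

theorem isSubmodule_rClosure (X : Set M) : ℳ.IsSubmodule (ℳ.rClosure X) := fun m hm a =>
  AddSubgroup.mem_sInf.mpr fun N hN => hN.2 m (AddSubgroup.mem_sInf.mp hm N hN) a

theorem rClosure_le {X : Set M} {N : AddSubgroup M} (hX : X ⊆ N) (hN : ℳ.IsSubmodule N) :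
    ℳ.rClosure X ≤ N :=
  sInf_le ⟨hX, hN⟩

theorem closure_le_rClosure (X : Set M) : AddSubgroup.closure X ≤ ℳ.rClosure X :=
  (AddSubgroup.closure_le _).mpr subset_rClosure

theorem FG.top_mem_of_isChain (hfg : ℳ.FG) {c : Set (AddSubgroup M)}
    (hc : IsChain (· ≤ ·) c) (hne : c.Nonempty) (hsub : ∀ N ∈ c, ℳ.IsSubmodule N)
    (htop : sSup c = ⊤) : ⊤ ∈ c := by
  obtain ⟨s, hs⟩ := hfg
  have hsc : (s : Set M) ⊆ ⋃ N ∈ c, (N : Set M) := fun x _ => by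
    simpa using (AddSubgroup.mem_sSup_of_directedOn hne hc.directedOn).mp
      (htop ▸ AddSubgroup.mem_top x)
  obtain ⟨N, hNc, hsN⟩ := hc.directedOn.exists_mem_subset_of_finset_subset_biUnion hne hsc
  rwa [← top_unique (hs ▸ rClosure_le hsN (hsub N hNc))]

theorem FinGrCogenerated.bot_mem_of_isChain (hcog : ℳ.FinGrCogenerated)
    {c : Set (AddSubgroup M)} (hc : IsChain (· ≤ ·) c) (hne : c.Nonempty)
    (hgr : ∀ N ∈ c, ℳ.IsGrSub N) (hbot : sInf c = ⊥) : ⊥ ∈ c := by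
  classical
  obtain ⟨t, htc, ht⟩ := hcog c hgr hbot
  obtain ⟨y, hy⟩ := hne
  have hinf : (insert y t).inf' (Finset.insert_nonempty y t) id ∈ c := by
    refine Finset.inf'_mem c (fun a ha b hb => ?_) _ _ _ fun N hN => ?_
    · rcases hc.total ha hb with h | h
      · rwa [inf_eq_left.mpr h]
      · rwa [inf_eq_right.mpr h]
    · rcases Finset.mem_insert.mp hN with rfl | hN
      exacts [hy, htc hN]
  rwa [Finset.inf'_eq_inf, Finset.inf_insert, ht, inf_bot_eq] at hinf

theorem coe_restrict_smul {P : AddSubgroup M} (hP : ℳ.IsSubmodule P) (m : P) (a : R) :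
    ((ℳ.restrict P).smul m a : M) = ℳ.smul m a := by
  simp [restrict, hP m m.2 a]

theorem IsGrSub.map_subtype {P : AddSubgroup M} (hP : ℳ.IsSubmodule P) {N : AddSubgroup P}
    (hN : (ℳ.restrict P).IsGrSub N) : ℳ.IsGrSub (N.map P.subtype) := by
  refine ⟨?_, ?_⟩
  · rintro _ ⟨m, hm, rfl⟩ a
    exact ⟨_, hN.1 m hm a, coe_restrict_smul hP m a⟩
  · rintro _ ⟨m, hm, rfl⟩
    have h := AddSubgroup.mem_map_of_mem P.subtype (hN.2 m hm)
    rw [AddMonoidHom.map_closure] at h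
    refine AddSubgroup.closure_mono ?_ h
    rintro _ ⟨w, ⟨hwN, e, f, γ, hw⟩, rfl⟩
    exact ⟨⟨w, hwN, rfl⟩, e, f, γ, hw⟩

theorem FinGrCogenerated.restrict {P : AddSubgroup M} (hP : ℳ.IsSubmodule P)
    (hcog : ℳ.FinGrCogenerated) : (ℳ.restrict P).FinGrCogenerated := by
  classical
  intro S hS hbot
  rcases S.eq_empty_or_nonempty with rfl | ⟨N, hN⟩
  · exact ⟨∅, by simp, by simpa using hbot⟩
  have hle : sInf ((·.map P.subtype) '' S) ≤ P :=
    (sInf_le (Set.mem_image_of_mem _ hN)).trans (AddSubgroup.map_subtype_le N)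
  have hbotM : sInf ((·.map P.subtype) '' S) = ⊥ := by
    rw [← AddSubgroup.map_addSubgroupOf_eq_of_le hle, ← AddSubgroup.sInf_image_addSubgroupOf,
      AddSubgroup.image_addSubgroupOf_image_map_subtype, hbot, AddSubgroup.map_bot]
  obtain ⟨t, htS, ht⟩ := hcog _ (Set.forall_mem_image.mpr fun N hN => (hS N hN).map_subtype hP)
    hbotM
  obtain ⟨t', ht'S, rfl⟩ := Finset.subset_set_image_iff.mp htS
  refine ⟨t', ht'S, ?_⟩
  rw [Finset.inf_id_eq_sInf] at ht ⊢
  have h := congrArg (·.addSubgroupOf P) ht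
  simpa only [Finset.coe_image, ← AddSubgroup.sInf_image_addSubgroupOf,
    AddSubgroup.image_addSubgroupOf_image_map_subtype, AddSubgroup.bot_addSubgroupOf] using h

end

variable {R M : Type u} [AddCommGroup R] [AddCommGroup M] {𝒜 : GRingData Γ R}
  {ℳ : GModData Γ R M}

namespace IsGraded

def smulRight (hℳ : ℳ.IsGraded 𝒜) (a : R) : M →+ M :=
  AddMonoidHom.mk' (ℳ.smul · a) fun m n => hℳ.add_smul m n a

def smulLeft (hℳ : ℳ.IsGraded 𝒜) (m : M) : R →+ M :=
  AddMonoidHom.mk' (ℳ.smul m) (hℳ.smul_add m)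

theorem smul_mem_of_mem_closure (hℳ : ℳ.IsGraded 𝒜) {s : Set M} {H : AddSubgroup M}
    (hs : ∀ x ∈ s, ∀ a : R, ℳ.smul x a ∈ H) {m : M} (hm : m ∈ AddSubgroup.closure s)
    (a : R) : ℳ.smul m a ∈ H :=
  (AddSubgroup.closure_le (H.comap (hℳ.smulRight a))).mpr (fun x hx => hs x hx a) hm

theorem isSubmodule_sup (hℳ : ℳ.IsGraded 𝒜) {N N' : AddSubgroup M} (hN : ℳ.IsSubmodule N)
    (hN' : ℳ.IsSubmodule N') : ℳ.IsSubmodule (N ⊔ N') := fun _ hm a =>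
  (sup_le (fun x hx => AddSubgroup.mem_sup_left (hN x hx a))
    (fun x hx => AddSubgroup.mem_sup_right (hN' x hx a)) :
    N ⊔ N' ≤ (N ⊔ N').comap (hℳ.smulRight a)) hm

end IsGraded

theorem IsGrSub.summand_mem (hℳ : ℳ.IsGraded 𝒜) {N : AddSubgroup M} (hN : ℳ.IsGrSub N)
    {n : M} (hn : n ∈ N) {s : Finset (GrIdx Γ)} {cf : GrIdx Γ → M}
    (hcf : ∀ γ ∈ s, cf γ ∈ ℳ.component γ.2.2) (hsum : n = ∑ γ ∈ s, cf γ) :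
    ∀ γ ∈ s, cf γ ∈ N := by
  classical
  obtain ⟨f, hf, hfsum⟩ := exists_finsupp_of_mem_homogeneousSpan (hN.le_homogeneousSpan hn)
  -- `d` is the difference of two homogeneous decompositions of `n`, so independence kills it.
  let d : GrIdx Γ → M := fun γ => (if γ ∈ s then cf γ else 0) - f γ
  have hd_mem : ∀ γ ∈ s ∪ f.support, d γ ∈ ℳ.component γ.2.2 := by
    intro γ _
    refine sub_mem ?_ (hf γ).1
    split_ifs with h
    exacts [hcf γ h, zero_mem _]
  have hd_sum : ∑ γ ∈ s ∪ f.support, d γ = 0 := by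
    rw [Finset.sum_sub_distrib, Finset.sum_ite_mem, Finset.union_inter_cancel_left, ← hsum,
      ← Finsupp.sum_of_support_subset f Finset.subset_union_right (fun _ x => x)
        fun _ _ => rfl, ← hfsum, sub_self]
  intro γ hγ
  have h := hℳ.independent _ d hd_mem hd_sum γ (Finset.mem_union_left _ hγ)
  simp only [d, if_pos hγ, sub_eq_zero] at h
  exact h ▸ (hf γ).2

theorem isGrSub_sInf (hℳ : ℳ.IsGraded 𝒜) {S : Set (AddSubgroup M)}
    (hS : ∀ N ∈ S, ℳ.IsGrSub N) : ℳ.IsGrSub (sInf S) := by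
  refine ⟨fun m hm a => AddSubgroup.mem_sInf.mpr fun N hN =>
    (hS N hN).1 m (AddSubgroup.mem_sInf.mp hm N hN) a, fun n hn => ?_⟩
  obtain ⟨s, cf, hcf, hsum⟩ := hℳ.decompose n
  rw [hsum]
  refine AddSubgroup.sum_mem _ fun γ hγ => AddSubgroup.subset_closure ⟨?_, _, _, _, hcf γ hγ⟩
  exact AddSubgroup.mem_sInf.mpr fun N hN =>
    (hS N hN).summand_mem hℳ (AddSubgroup.mem_sInf.mp hn N hN) hcf hsum γ hγ

theorem isGrSub_sSup (hℳ : ℳ.IsGraded 𝒜) {S : Set (AddSubgroup M)}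
    (hS : ∀ N ∈ S, ℳ.IsGrSub N) : ℳ.IsGrSub (sSup S) :=
  ⟨fun _ hm a => (sSup_le fun N hN _ hx => le_sSup hN ((hS N hN).1 _ hx a) :
      sSup S ≤ (sSup S).comap (hℳ.smulRight a)) hm,
    sSup_le fun N hN => (hS N hN).le_homogeneousSpan.trans (homogeneousSpan_mono (le_sSup hN))⟩

theorem isGrSub_grRad (hℳ : ℳ.IsGraded 𝒜) : ℳ.IsGrSub ℳ.grRad :=
  isGrSub_sInf hℳ fun _ hN => hN.1

theorem isGrSub_grSoc (hℳ : ℳ.IsGraded 𝒜) : ℳ.IsGrSub ℳ.grSoc :=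
  isGrSub_sSup hℳ fun _ hN => hN.1

theorem isSubmodule_homogeneousSpan (h𝒜 : 𝒜.IsObjectUnital) (hℳ : ℳ.IsGraded 𝒜)
    {N : AddSubgroup M} (hN : ℳ.IsSubmodule N) : ℳ.IsSubmodule (ℳ.homogeneousSpan N) := by
  refine fun m hm => hℳ.smul_mem_of_mem_closure (fun x hx b => ?_) hm
  obtain ⟨hxN, e, f, σ, hxσ⟩ := hx
  obtain ⟨t, cf, hcf, rfl⟩ := h𝒜.decompose b
  rw [show ℳ.smul x (∑ τ ∈ t, cf τ) = ∑ τ ∈ t, ℳ.smul x (cf τ) from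
    map_sum (hℳ.smulLeft x) _ _]
  refine AddSubgroup.sum_mem _ fun τ hτ => ?_
  by_cases hτσ : τ.2.1 = e
  · subst hτσ
    exact AddSubgroup.subset_closure
      ⟨hN x hxN _, _, _, _, hℳ.smul_mem σ τ.2.2 hxσ (hcf τ hτ)⟩
  · rw [hℳ.smul_eq_zero σ τ.2.2 hτσ hxσ (hcf τ hτ)]
    exact zero_mem _

theorem isGrSub_rClosure (h𝒜 : 𝒜.IsObjectUnital) (hℳ : ℳ.IsGraded 𝒜) {X : Set M}
    (hX : ∀ x ∈ X, ℳ.IsHomogeneous x) : ℳ.IsGrSub (ℳ.rClosure X) :=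
  ⟨isSubmodule_rClosure X, rClosure_le
    (fun x hx => AddSubgroup.subset_closure ⟨subset_rClosure hx, hX x hx⟩)
    (isSubmodule_homogeneousSpan h𝒜 hℳ (isSubmodule_rClosure X))⟩

theorem IsGraded.exists_homogeneous_finset (hℳ : ℳ.IsGraded 𝒜) (t : Finset M) :
    ∃ u : Finset M, (∀ y ∈ u, ℳ.IsHomogeneous y) ∧
      (t : Set M) ⊆ AddSubgroup.closure (u : Set M) := by
  classical
  choose s cf hcf hsum using hℳ.decompose
  refine ⟨t.biUnion fun x => (s x).image (cf x), ?_, fun x hx => ?_⟩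
  · simp only [Finset.mem_biUnion, Finset.mem_image]
    rintro y ⟨x, -, γ, hγ, rfl⟩
    exact ⟨_, _, _, hcf x γ hγ⟩
  · rw [SetLike.mem_coe, hsum x]
    refine AddSubgroup.sum_mem _ fun γ hγ => AddSubgroup.subset_closure ?_
    simp only [Finset.coe_biUnion, Finset.coe_image, Set.mem_iUnion, Set.mem_image]
    exact ⟨x, hx, γ, hγ, rfl⟩

theorem IsGraded.quot_smul_mk (hℳ : ℳ.IsGraded 𝒜) {N : AddSubgroup M}
    (hN : ℳ.IsSubmodule N) (m : M) (a : R) :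
    (ℳ.quot N).smul (m : M ⧸ N) a = (ℳ.smul m a : M ⧸ N) := by
  have hm : -Quotient.out (m : M ⧸ N) + m ∈ N := QuotientAddGroup.eq.mp (Quotient.out_eq _)
  have h : hℳ.smulRight a (-Quotient.out (m : M ⧸ N) + m) ∈ N := hN _ hm a
  rw [map_add, map_neg] at h
  exact QuotientAddGroup.eq.mpr h

theorem FG.quot (hℳ : ℳ.IsGraded 𝒜) {N : AddSubgroup M} (hN : ℳ.IsSubmodule N)
    (hfg : ℳ.FG) : (ℳ.quot N).FG := by
  classical
  obtain ⟨s, hs⟩ := hfg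
  let Q := (ℳ.quot N).rClosure ↑(s.image (QuotientAddGroup.mk' N))
  have hle : ℳ.rClosure ↑s ≤ Q.comap (QuotientAddGroup.mk' N) :=
    rClosure_le (fun x hx => subset_rClosure (Finset.mem_image_of_mem _ hx)) fun m hm a => by
      have h := isSubmodule_rClosure _ _ hm a
      rw [QuotientAddGroup.mk'_apply, hℳ.quot_smul_mk hN] at h
      exact h
  refine ⟨s.image (QuotientAddGroup.mk' N), top_unique ?_⟩
  rintro q -
  obtain ⟨m, rfl⟩ := QuotientAddGroup.mk'_surjective N q
  exact hle (hs ▸ AddSubgroup.mem_top m)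

theorem IsGraded.sup_eq_top_of_rClosure_eq_top (hℳ : ℳ.IsGraded 𝒜) {N X : AddSubgroup M}
    (hN : ℳ.IsSubmodule N) (hX : ℳ.IsSubmodule X) {t : Set (M ⧸ N)}
    (ht : (ℳ.quot N).rClosure t = ⊤) (htX : t ⊆ X.map (QuotientAddGroup.mk' N)) :
    X ⊔ N = ⊤ := by
  have hmap : (ℳ.quot N).rClosure t ≤ (X ⊔ N).map (QuotientAddGroup.mk' N) := by
    refine rClosure_le (htX.trans (AddSubgroup.map_mono le_sup_left)) ?_
    rintro _ ⟨m, hm, rfl⟩ a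
    exact ⟨_, hℳ.isSubmodule_sup hX hN m hm a, (hℳ.quot_smul_mk hN m a).symm⟩
  have h := congrArg (AddSubgroup.comap (QuotientAddGroup.mk' N)) (top_unique (ht ▸ hmap))
  rwa [AddSubgroup.comap_map_eq, QuotientAddGroup.ker_mk', sup_assoc, sup_idem,
    AddSubgroup.comap_top] at h

theorem FG.exists_le_isGrMaximalSub (hℳ : ℳ.IsGraded 𝒜) (hfg : ℳ.FG) {X : AddSubgroup M}
    (hX : ℳ.IsGrSub X) (hXtop : X ≠ ⊤) : ∃ N, ℳ.IsGrMaximalSub N ∧ X ≤ N := by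
  let T : Set (AddSubgroup M) := {N | ℳ.IsGrSub N ∧ N ≠ ⊤}
  have hchain : ∀ c ⊆ T, IsChain (· ≤ ·) c → ∀ y ∈ c, ∃ ub ∈ T, ∀ z ∈ c, z ≤ ub := by
    intro c hcT hc y hy
    have hgr : ∀ N ∈ c, ℳ.IsGrSub N := fun N hN => (hcT hN).1
    refine ⟨sSup c, ⟨isGrSub_sSup hℳ hgr, fun htop => ?_⟩, fun _ hz => le_sSup hz⟩
    exact (hcT (hfg.top_mem_of_isChain hc ⟨y, hy⟩ (fun N hN => (hgr N hN).isSubmodule) htop)).2 rfl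
  obtain ⟨N, hXN, hN⟩ := zorn_le_nonempty₀ T hchain X ⟨hX, hXtop⟩
  refine ⟨N, ⟨hN.prop.1, hN.prop.2, fun L hL hNL => ?_⟩, hXN⟩
  by_cases hLtop : L = ⊤
  · exact Or.inr hLtop
  · exact Or.inl (le_antisymm (hN.2 ⟨hL, hLtop⟩ hNL) hNL)

theorem FG.grSuperfluous_grRad (hℳ : ℳ.IsGraded 𝒜) (hfg : ℳ.FG) :
    ℳ.GrSuperfluous ℳ.grRad := by
  intro X hX hsup
  by_contra hXtop
  obtain ⟨N, hN, hXN⟩ := hfg.exists_le_isGrMaximalSub hℳ hX hXtop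
  exact hN.2.1 (top_unique (hsup ▸ sup_le (sInf_le hN) hXN))

theorem fg_of_fg_quot_of_grSuperfluous (h𝒜 : 𝒜.IsObjectUnital) (hℳ : ℳ.IsGraded 𝒜)
    {N : AddSubgroup M} (hN : ℳ.IsSubmodule N) (hq : (ℳ.quot N).FG)
    (hsup : ℳ.GrSuperfluous N) : ℳ.FG := by
  classical
  obtain ⟨t, ht⟩ := hq
  obtain ⟨u, hu, htu⟩ := hℳ.exists_homogeneous_finset (t.image Quotient.out)
  have hX : ℳ.IsGrSub (ℳ.rClosure ↑u) := isGrSub_rClosure h𝒜 hℳ hu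
  refine ⟨u, hsup _ hX ?_⟩
  rw [sup_comm]
  refine hℳ.sup_eq_top_of_rClosure_eq_top hN hX.1 ht fun q hq =>
    ⟨Quotient.out q, closure_le_rClosure _ (htu ?_), Quotient.out_eq q⟩
  exact Finset.mem_image_of_mem _ hq

theorem IsGrSub.addSubgroupOf (hℳ : ℳ.IsGraded 𝒜) {N P : AddSubgroup M} (hN : ℳ.IsGrSub N)
    (hP : ℳ.IsGrSub P) : (ℳ.restrict P).IsGrSub (N.addSubgroupOf P) := by
  refine ⟨fun m hm a => ?_, fun n hn => ?_⟩
  · rw [AddSubgroup.mem_addSubgroupOf, coe_restrict_smul hP.1]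
    exact hN.1 _ hm a
  · rw [← AddSubgroup.mem_map_iff_mem P.subtype_injective, AddMonoidHom.map_closure]
    obtain ⟨s, cf, hcf, hsum⟩ := hℳ.decompose (n : M)
    rw [AddSubgroup.subtype_apply, hsum]
    refine AddSubgroup.sum_mem _ fun γ hγ => AddSubgroup.subset_closure
      ⟨⟨cf γ, hP.summand_mem hℳ n.2 hcf hsum γ hγ⟩,
        ⟨hN.summand_mem hℳ hn hcf hsum γ hγ, _, _, _, hcf γ hγ⟩, rfl⟩

theorem finGrCogenerated_of_grEssential (hℳ : ℳ.IsGraded 𝒜) {P : AddSubgroup M}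
    (hP : ℳ.IsGrSub P) (hcog : (ℳ.restrict P).FinGrCogenerated) (hess : ℳ.GrEssential P) :
    ℳ.FinGrCogenerated := by
  classical
  intro S hS hbot
  obtain ⟨t', ht'S, ht'⟩ := hcog ((·.addSubgroupOf P) '' S)
    (Set.forall_mem_image.mpr fun N hN => (hS N hN).addSubgroupOf hℳ hP)
    (by rw [AddSubgroup.sInf_image_addSubgroupOf, hbot, AddSubgroup.bot_addSubgroupOf])
  obtain ⟨t, htS, rfl⟩ := Finset.subset_set_image_iff.mp ht'S
  refine ⟨t, htS, hess _ ?_ ?_⟩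
  · rw [Finset.inf_id_eq_sInf]
    exact isGrSub_sInf hℳ fun N hN => hS N (htS hN)
  · rw [Finset.inf_id_eq_sInf, Finset.coe_image, AddSubgroup.sInf_image_addSubgroupOf,
      AddSubgroup.addSubgroupOf_eq_bot] at ht'
    rw [Finset.inf_id_eq_sInf]
    exact disjoint_iff.mp ht'.symm

theorem FinGrCogenerated.exists_isGrSimpleSub_le (hℳ : ℳ.IsGraded 𝒜)
    (hcog : ℳ.FinGrCogenerated) {X : AddSubgroup M} (hX : ℳ.IsGrSub X) (hXbot : X ≠ ⊥) :
    ∃ N, ℳ.IsGrSimpleSub N ∧ N ≤ X := by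
  let T : Set (AddSubgroup M)ᵒᵈ := OrderDual.ofDual ⁻¹' {N | ℳ.IsGrSub N ∧ N ≠ ⊥}
  have hchain : ∀ c ⊆ T, IsChain (· ≤ ·) c → ∀ y ∈ c, ∃ lb ∈ T, ∀ z ∈ c, z ≤ lb := by
    intro c hcT hc y hy
    let c' : Set (AddSubgroup M) := OrderDual.toDual ⁻¹' c
    have hgr : ∀ N ∈ c', ℳ.IsGrSub N := fun N hN => (hcT hN).1
    refine ⟨OrderDual.toDual (sInf c'), ⟨isGrSub_sInf hℳ hgr, fun hbot => ?_⟩,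
      fun z hz => sInf_le (show OrderDual.ofDual z ∈ c' from hz)⟩
    exact (hcT (hcog.bot_mem_of_isChain hc.symm ⟨_, hy⟩ hgr hbot)).2 rfl
  obtain ⟨N, hNX, hN⟩ := zorn_le_nonempty₀ T hchain (OrderDual.toDual X) ⟨hX, hXbot⟩
  refine ⟨OrderDual.ofDual N, ⟨hN.prop.1, hN.prop.2, fun L hL hLN => ?_⟩, hNX⟩
  by_cases hLbot : L = ⊥
  · exact Or.inl hLbot
  · exact Or.inr (le_antisymm hLN (hN.2 (y := OrderDual.toDual L) ⟨hL, hLbot⟩ hLN))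

theorem FinGrCogenerated.grEssential_grSoc (hℳ : ℳ.IsGraded 𝒜) (hcog : ℳ.FinGrCogenerated) :
    ℳ.GrEssential ℳ.grSoc := by
  intro X hX hdisj
  by_contra hXbot
  obtain ⟨N, hN, hNX⟩ := hcog.exists_isGrSimpleSub_le hℳ hX hXbot
  exact hN.2.1 (le_bot_iff.mp (hdisj ▸ le_inf (le_sSup hN) hNX))

end GModData

/-- Let `R` be a `Γ`-graded ring and `M` a `Γ`-graded right
`R`-module. Then (1) `M` is finitely generated iff `M/rad^gr(M)` is finitely
generated and `rad^gr(M)` is gr-superfluous in `M`; (2) `M` is finitely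
gr-cogenerated iff `soc_gr(M)` is finitely gr-cogenerated and `soc_gr(M)` is
gr-essential in `M`. -/
theorem fg_iff_quot_rad_fg_and_finGrCog_iff_soc_finGrCog
    {Γ : Type u} [Groupoid.{u} Γ] {R : Type u} [AddCommGroup R] {M : Type u}
    [AddCommGroup M] (𝒜 : GRingData Γ R) (h𝒜 : 𝒜.IsObjectUnital)
    (ℳ : GModData Γ R M) (hℳ : ℳ.IsGraded 𝒜) :
    (ℳ.FG ↔ (ℳ.quot ℳ.grRad).FG ∧ ℳ.GrSuperfluous ℳ.grRad) ∧
    (ℳ.FinGrCogenerated ↔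
      (ℳ.restrict ℳ.grSoc).FinGrCogenerated ∧ ℳ.GrEssential ℳ.grSoc) := by
  have hrad := (GModData.isGrSub_grRad hℳ).isSubmodule
  have hsoc := GModData.isGrSub_grSoc hℳ
  refine ⟨⟨fun hfg => ⟨hfg.quot hℳ hrad, hfg.grSuperfluous_grRad hℳ⟩, ?_⟩,
    ⟨fun hcog => ⟨hcog.restrict hsoc.isSubmodule, hcog.grEssential_grSoc hℳ⟩, ?_⟩⟩
  · rintro ⟨hq, hsup⟩
    exact GModData.fg_of_fg_quot_of_grSuperfluous h𝒜 hℳ hrad hq hsup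
  · rintro ⟨hcog, hess⟩
    exact GModData.finGrCogenerated_of_grEssential hℳ hsoc hcog hess
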